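/- arXiv:2504.15161 — 4 statements merged into one kernel-verified Lean document; each statement's English description precedes it below -/
import Mathlib

section
/- Let n ≥ 1 be an integer and let x be a complex number such that x ≠ 1 and x + k ≠ 0 for every integer k with −1 ≤ k ≤ 2n − 1. Then ∑_{j=0}^{n} (−1)^j · C(n, j) · (x + 2j − 1) / (x + j − 1)^(n+1) = 0. (For n = 0 the sum equals 1.) -/
/-- The rising factorial (Pochhammer symbol) `(x)^(n) = x(x+1)⋯(x+n-1)`. -/
noncomputable def risingFactorial (x : ℂ) (n : ℕ) : ℂ :=
  ∏ i ∈ Finset.range n, (x + i)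

lemma rf_succ_left (x : ℂ) (n : ℕ) :
    risingFactorial x (n+1) = x * risingFactorial (x+1) n := by
  unfold risingFactorial
  rw [Finset.prod_range_succ']
  simp only [Nat.cast_zero, add_zero]
  rw [mul_comm]
  congr 1
  apply Finset.prod_congr rfl
  intros i _
  push_cast
  ring

lemma rf_succ_right (x : ℂ) (n : ℕ) :
    risingFactorial x (n+1) = risingFactorial x n * (x + n) := by
  unfold risingFactorial; rw [Finset.prod_range_succ]

lemma rf_ne_zero (y : ℂ) (n : ℕ) (h : ∀ i, i < n → y + i ≠ 0) :
    risingFactorial y n ≠ 0 :=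
  Finset.prod_ne_zero_iff.mpr (fun i hi => h i (Finset.mem_range.mp hi))

lemma choose_cast_id (m k : ℕ) (x : ℂ) :
    (((m+1).choose (k+1) : ℕ) : ℂ) * (x + 2*k + 1)
      = ((m.choose (k+1) : ℕ) : ℂ) * (x + k) + ((m.choose k : ℕ) : ℂ) * (x + k + 1 + m) := by
  have h : ((m.choose (k+1) : ℕ):ℂ) * (k+1) = ((m.choose k : ℕ):ℂ) * ((m:ℂ) - k) := by
    rcases le_or_gt k m with h | h
    · have h3 : ((m.choose (k+1) * (k+1) : ℕ) : ℂ) = ((m.choose k * (m - k) : ℕ):ℂ) := by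
        exact_mod_cast congrArg (Nat.cast (R := ℂ)) (Nat.choose_succ_right_eq m k)
      push_cast [Nat.cast_sub h] at h3
      exact h3
    · simp [Nat.choose_eq_zero_of_lt h, Nat.choose_eq_zero_of_lt (Nat.lt_succ_of_lt h)]
  rw [Nat.choose_succ_succ]
  push_cast
  linear_combination h

theorem stmt_1 (n : ℕ) (hn : 1 ≤ n) (x : ℂ) (hx1 : x ≠ 1)
    (hx : ∀ k : ℤ, -1 ≤ k → k ≤ 2 * (n : ℤ) - 1 → x + k ≠ 0) :
    ∑ j ∈ Finset.range (n + 1),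
      (-1) ^ j * (n.choose j : ℂ) * (x + 2 * j - 1) / risingFactorial (x + j - 1) (n + 1)
      = 0 := by
  obtain ⟨m, rfl⟩ : ∃ m, n = m + 1 := ⟨n - 1, by omega⟩
  have hne : ∀ a : ℤ, -1 ≤ a → a ≤ 2*(m:ℤ) + 1 → x + (a:ℂ) ≠ 0 := by
    intro a h1 h2
    exact hx a h1 (by push_cast; omega)
  set g : ℕ → ℂ := fun i => (-1:ℂ)^i * ((m.choose i : ℕ) : ℂ) / risingFactorial (x + i) (m+1)
    with hg
  set G : ℕ → ℂ := fun i => if i = 0 then 0 else g (i-1) with hG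
  have key : ∀ j ∈ Finset.range (m+1+1),
      (-1)^j * (((m+1).choose j : ℕ) : ℂ) * (x + 2*j - 1) / risingFactorial (x + j - 1) (m+1+1)
      = G (j+1) - G j := by
    intro j hj
    rw [Finset.mem_range] at hj
    match j with
    | 0 =>
      simp only [hG, hg]
      have hx1' : x - 1 ≠ 0 := sub_ne_zero.mpr hx1
      have hR : risingFactorial x (m+1) ≠ 0 := by
        apply rf_ne_zero
        intro i hi
        have h := hne i (by omega) (by omega)
        push_cast at h
        exact h
      norm_num
      rw [rf_succ_left, sub_add_cancel]
      field_simp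
    | (k+1) =>
      have hk : k ≤ m := by omega
      have hA : x + (k:ℂ) ≠ 0 := by
        have h := hne k (by omega) (by omega)
        push_cast at h
        exact h
      have hB : x + (k:ℂ) + 1 + m ≠ 0 := by
        have h := hne ((k:ℤ)+1+m) (by omega) (by omega)
        push_cast at h
        intro h0
        exact h (by linear_combination h0)
      have hS : risingFactorial (x + (k:ℂ) + 1) m ≠ 0 := by
        apply rf_ne_zero
        intro i hi
        have h := hne ((k:ℤ)+1+i) (by omega) (by omega)
        push_cast at h
        intro h0
        exact h (by linear_combination h0)
      simp only [hG, hg, if_neg (Nat.succ_ne_zero (k+1)), if_neg (Nat.succ_ne_zero k),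
        Nat.add_sub_cancel]
      have e1 : x + ((k+1:ℕ):ℂ) - 1 = x + k := by push_cast; ring
      have e2 : x + ((k+1:ℕ):ℂ) = x + k + 1 := by push_cast; ring
      have e3 : x + 2*((k+1:ℕ):ℂ) - 1 = x + 2*k + 1 := by push_cast; ring
      rw [e1, e2, e3, rf_succ_left (x + k) (m+1), rf_succ_right (x + k + 1) m,
          rf_succ_left (x + k) m]
      set S := risingFactorial (x + k + 1) m with hSdef
      rw [div_sub_div _ _ (mul_ne_zero hS hB) (mul_ne_zero hA hS),
          div_eq_div_iff (mul_ne_zero hA (mul_ne_zero hS hB))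
            (mul_ne_zero (mul_ne_zero hS hB) (mul_ne_zero hA hS))]
      linear_combination ((-1:ℂ)^(k+1) * (x+(k:ℂ)) * S^2 * (x + k + 1 + m)) * choose_cast_id m k x
  rw [Finset.sum_congr rfl key, Finset.sum_range_sub]
  simp [hG, hg, Nat.choose_eq_zero_of_lt (Nat.lt_succ_self m)]
end

section
/- Let n ≥ 1 be an integer and let x be a complex number such that x ≠ 1 and x + k ≠ 0 for every integer k with −1 ≤ k ≤ 2n − 1. Then ∑_{j=0}^{n} (−1)^j · C(n, j) · 1 / ( (x + j − 1)^(j) · (x + 2j)^(n−j) ) = 0. (For n = 0 the sum equals 1.) -/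
lemma rf_zero (y : ℂ) : risingFactorial y 0 = 1 := by
  simp [risingFactorial]

lemma rf_one (y : ℂ) : risingFactorial y 1 = y := by
  simp [risingFactorial]

lemma rf_add (y : ℂ) (a b : ℕ) :
    risingFactorial y (a + b) = risingFactorial y a * risingFactorial (y + a) b := by
  unfold risingFactorial
  rw [Finset.prod_range_add]
  congr 1
  refine Finset.prod_congr rfl fun i _ => ?_
  push_cast
  ring

lemma rf_succ (y : ℂ) (m : ℕ) :
    risingFactorial y (m + 1) = risingFactorial y m * (y + m) := by
  unfold risingFactorial
  rw [Finset.prod_range_succ]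

lemma alg (c1 c2 c3 u v z D1 D2 D3 D4 : ℂ)
    (h1 : D1 ≠ 0) (h2 : D2 ≠ 0) (h3 : D3 ≠ 0) (h4 : D4 ≠ 0) (hz : z ≠ 0)
    (hA : D1 * (u * D2) = z * D4) (hB : D3 * v = z * D4)
    (hnum : c1 * u = c2 * z + c3 * v) :
    c1 * (1 / (D1 * D2)) = c2 / D4 + c3 / D3 := by
  have h34 : z * D4 ≠ 0 := mul_ne_zero hz h4
  have e1 : (1 : ℂ) / (D1 * D2) = u / (z * D4) := by
    rw [div_eq_div_iff (mul_ne_zero h1 h2) h34]; linear_combination -hA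
  have e2 : (1 : ℂ) / D3 = v / (z * D4) := by
    rw [div_eq_div_iff h3 h34]; linear_combination -hB
  have e3 : (1 : ℂ) / D4 = z / (z * D4) := by
    rw [div_eq_div_iff h4 h34]; ring
  calc c1 * (1 / (D1 * D2)) = c1 * u / (z * D4) := by rw [e1]; ring
    _ = (c2 * z + c3 * v) / (z * D4) := by rw [hnum]
    _ = c2 * (1 / D4) + c3 * (1 / D3) := by rw [e2, e3]; ring
    _ = c2 / D4 + c3 / D3 := by ring

theorem stmt_2 (n : ℕ) (hn : 1 ≤ n) (x : ℂ) (hx1 : x ≠ 1)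
    (hx : ∀ k : ℤ, -1 ≤ k → k ≤ 2 * (n : ℤ) - 1 → x + k ≠ 0) :
    ∑ j ∈ Finset.range (n + 1),
      (-1) ^ j * (n.choose j : ℂ) *
        (1 / (risingFactorial (x + j - 1) j * risingFactorial (x + 2 * j) (n - j)))
      = 0 := by
  have hfac : ∀ k : ℕ, k ≤ 2 * n - 1 → x + k ≠ 0 := by
    intro k hk
    have := hx (k : ℤ) (by omega) (by omega)
    simpa using this
  have key : ∀ a m : ℕ, a + m ≤ 2 * n → risingFactorial (x + a) m ≠ 0 := by
    intro a m h
    unfold risingFactorial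
    rw [Finset.prod_ne_zero_iff]
    intro t ht
    rw [Finset.mem_range] at ht
    have h2 := hfac (a + t) (by omega)
    push_cast at h2
    rw [add_assoc]
    exact h2
  set g : ℕ → ℂ := fun i => (-1) ^ i * ((n - 1).choose i : ℂ) / risingFactorial (x + i) n
    with hg
  set f : ℕ → ℂ := fun j => Nat.casesOn j (0 : ℂ) g with hf
  have hstep : ∀ j ∈ Finset.range (n + 1),
      (-1) ^ j * (n.choose j : ℂ) *
        (1 / (risingFactorial (x + j - 1) j * risingFactorial (x + 2 * j) (n - j)))
      = f (j + 1) - f j := by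
    intro j hj
    rw [Finset.mem_range] at hj
    match j with
    | 0 =>
      show _ = g 0 - 0
      rw [hg]
      simp [rf_zero]
    | (i + 1) =>
      obtain ⟨k, hk⟩ : ∃ k, n = i + 1 + k := ⟨n - (i + 1), by omega⟩
      show _ = g (i + 1) - g i
      rw [hg]
      simp only
      rw [show (x + (↑(i + 1) : ℂ) - 1) = x + (i : ℕ) by push_cast; ring,
        show (x + 2 * (↑(i + 1) : ℂ)) = x + ((2 * i + 2 : ℕ) : ℂ) by push_cast; ring,
        show n - (i + 1) = k from by omega]
      -- nonvanishing
      have hD1 : risingFactorial (x + (i : ℕ)) (i + 1) ≠ 0 := key i (i + 1) (by omega)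
      have hD2 : risingFactorial (x + ((2 * i + 2 : ℕ) : ℂ)) k ≠ 0 := key (2 * i + 2) k (by omega)
      have hD3 : risingFactorial (x + (i : ℕ)) n ≠ 0 := key i n (by omega)
      have hD4 : risingFactorial (x + ((i + 1 : ℕ) : ℂ)) n ≠ 0 := key (i + 1) n (by omega)
      have hz1 : x + ((i : ℕ) : ℂ) ≠ 0 := hfac i (by omega)
      -- structural identities
      have hA : risingFactorial (x + (i : ℕ)) (n + 1)
          = risingFactorial (x + (i : ℕ)) (i + 1) *
            ((x + ((2 * i + 1 : ℕ) : ℂ)) * risingFactorial (x + ((2 * i + 2 : ℕ) : ℂ)) k) := by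
        rw [show n + 1 = (i + 1) + (1 + k) from by omega, rf_add,
          rf_add (x + ((i : ℕ) : ℂ) + ((i + 1 : ℕ) : ℂ)) 1 k, rf_one]
        rw [show x + ((i : ℕ) : ℂ) + ((i + 1 : ℕ) : ℂ) = x + ((2 * i + 1 : ℕ) : ℂ) by
          push_cast; ring]
        rw [show x + ((2 * i + 1 : ℕ) : ℂ) + ((1 : ℕ) : ℂ) = x + ((2 * i + 2 : ℕ) : ℂ) by
          push_cast; ring]
      have hB : risingFactorial (x + (i : ℕ)) (n + 1)
          = risingFactorial (x + (i : ℕ)) n * (x + ((i + n : ℕ) : ℂ)) := by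
        rw [rf_succ]
        rw [show x + ((i : ℕ) : ℂ) + (n : ℂ) = x + ((i + n : ℕ) : ℂ) by push_cast; ring]
      have hC : risingFactorial (x + (i : ℕ)) (n + 1)
          = (x + ((i : ℕ) : ℂ)) * risingFactorial (x + ((i + 1 : ℕ) : ℂ)) n := by
        rw [show n + 1 = 1 + n from by omega, rf_add, rf_one]
        rw [show x + ((i : ℕ) : ℂ) + ((1 : ℕ) : ℂ) = x + ((i + 1 : ℕ) : ℂ) by push_cast; ring]
      have hAC := hA.symm.trans hC
      have hBC := hB.symm.trans hC
      -- choose identities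
      have hp : (((n - 1).choose (i + 1) : ℂ)) + ((n - 1).choose i : ℂ) = (n.choose (i + 1) : ℂ) := by
        have : (n - 1 + 1).choose (i + 1) = (n - 1).choose i + (n - 1).choose (i + 1) :=
          Nat.choose_succ_succ _ _
        rw [show n - 1 + 1 = n from by omega] at this
        exact_mod_cast by omega
      have hm : (n : ℂ) * ((n - 1).choose i : ℂ) = ((i : ℂ) + 1) * (n.choose (i + 1) : ℂ) := by
        have h := Nat.add_one_mul_choose_eq (n - 1) i
        rw [show n - 1 + 1 = n from by omega] at h
        have h2 := congrArg (Nat.cast : ℕ → ℂ) h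
        push_cast at h2
        linear_combination h2
      have hnum : (n.choose (i + 1) : ℂ) * (x + ((2 * i + 1 : ℕ) : ℂ))
          = ((n - 1).choose (i + 1) : ℂ) * (x + ((i : ℕ) : ℂ))
            + ((n - 1).choose i : ℂ) * (x + ((i + n : ℕ) : ℂ)) := by
        push_cast
        push_cast at hp hm
        linear_combination (-(x + (i : ℂ))) * hp - hm
      have hz2 : x + ((2 * i + 1 : ℕ) : ℂ) ≠ 0 := hfac (2 * i + 1) (by omega)
      have halg := alg (n.choose (i + 1) : ℂ) ((n - 1).choose (i + 1) : ℂ) ((n - 1).choose i : ℂ)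
        (x + ((2 * i + 1 : ℕ) : ℂ)) (x + ((i + n : ℕ) : ℂ)) (x + ((i : ℕ) : ℂ))
        _ _ _ _ hD1 hD2 hD3 hD4 hz1 hAC hBC hnum
      linear_combination ((-1 : ℂ)) ^ (i + 1) * halg
  rw [Finset.sum_congr rfl hstep, Finset.sum_range_sub]
  have hch : (n - 1).choose n = 0 := Nat.choose_eq_zero_of_lt (by omega)
  show g n - 0 = 0
  rw [hg]
  simp [hch]
end

section
/- Let n ≥ 0 be an integer and let a, b, c be complex numbers such that a + b + m ≠ 0 for every integer m with 0 ≤ m ≤ n − 1. Then (a)^(n) · (c − b)^(n) / (a + b)^(n) = ∑_{k=0}^{n} (−1)^k · C(n, k) · (a + c + n − 1)^(k) · (c + k)^(n−k) · (b)^(k) / (a + b)^(k). -/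
open Finset
open Finset

noncomputable def G (n : ℕ) (m a b c : ℂ) : ℂ :=
  ∑ k ∈ Finset.range (n+1), (-1)^k * (n.choose k : ℂ) *
    (∏ i ∈ Finset.range k, ((m+a+c+i)*(b+i))) *
    (∏ j ∈ Finset.Ico k n, ((c+j)*(a+b+j)))

lemma prod_shift' (x : ℂ) (k : ℕ) :
    (∏ i ∈ range (k+1), (x + i)) = x * ∏ i ∈ range k, (x + 1 + i) := by
  rw [Finset.prod_range_succ']
  rw [mul_comm]
  congr 1
  · norm_num
  · exact Finset.prod_congr rfl (fun i _ => by push_cast; ring)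

lemma shift_prod (x : ℂ) (k : ℕ) :
    (∏ i ∈ range k, (x + i)) * (x + k) = x * ∏ i ∈ range k, (x + 1 + i) := by
  rw [← prod_shift', Finset.prod_range_succ]

lemma ico_shift (a b c : ℂ) (k n : ℕ) :
    (∏ j ∈ Ico k n, ((c+1+j)*(a+b+1+j))) = ∏ j ∈ Ico (k+1) (n+1), ((c+j)*(a+b+j)) := by
  rw [Finset.prod_Ico_eq_prod_range, Finset.prod_Ico_eq_prod_range]
  simp only [Nat.succ_sub_succ]
  exact Finset.prod_congr rfl (fun i _ => by push_cast; ring)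

lemma R1 (N : ℕ) (m a b c : ℂ) :
    G (N+1) m a b c
      = a*(c-b) * G N (m-2) (a+1) b (c+1) - m*b * G N (m-1) a (b+1) (c+1) := by
  set u : ℕ → ℂ := fun i => (m+a+c+i)*(b+i) with hu
  set v : ℕ → ℂ := fun j => (c+j)*(a+b+j) with hv
  set U : ℕ → ℂ := fun k => ∏ i ∈ range k, u i with hU
  set V : ℕ → ℂ := fun k => ∏ j ∈ Ico k (N+1), v j with hV
  set A : ℂ := ∑ k ∈ range (N+1), (-1)^k * (N.choose k : ℂ) * U k * V k with hA
  set B : ℂ := ∑ k ∈ range (N+1), (-1)^k * (N.choose k : ℂ) * U (k+1) * V (k+1) with hB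
  have hD : ∑ k ∈ range (N+1), (-1)^(k+1) * (N.choose (k+1) : ℂ) * U (k+1) * V (k+1)
      = A - V 0 := by
    have h2 : ∑ k ∈ range (N+2), (-1)^k * (N.choose k : ℂ) * U k * V k = A := by
      rw [Finset.sum_range_succ]
      simp [Nat.choose_succ_self]
      rfl
    have h3 := Finset.sum_range_succ' (fun k => (-1:ℂ)^k * (N.choose k : ℂ) * U k * V k) (N+1)
    rw [h2] at h3
    simp only [pow_zero, Nat.choose_zero_right, Nat.cast_one, one_mul] at h3
    have h4 : U 0 = 1 := by simp [hU]
    rw [h4, one_mul] at h3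
    linear_combination -h3
  have claim1 : G (N+1) m a b c = A - B := by
    have e1 := Finset.sum_range_succ' (fun k => (-1:ℂ)^k * ((N+1).choose k : ℂ) * U k * V k) (N+1)
    have hG : G (N+1) m a b c = ∑ k ∈ range (N+2), (-1)^k * ((N+1).choose k : ℂ) * U k * V k := rfl
    rw [hG, e1]
    have e2 : ∀ k ∈ range (N+1),
        (-1:ℂ)^(k+1) * ((N+1).choose (k+1) : ℂ) * U (k+1) * V (k+1)
        = (-1)^(k+1) * (N.choose (k+1) : ℂ) * U (k+1) * V (k+1)
          - (-1)^k * (N.choose k : ℂ) * U (k+1) * V (k+1) := by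
      intro k _
      have : ((N+1).choose (k+1) : ℂ) = (N.choose k : ℂ) + (N.choose (k+1) : ℂ) := by
        rw [Nat.choose_succ_succ]; push_cast; ring
      rw [this]; ring
    rw [Finset.sum_congr rfl e2, Finset.sum_sub_distrib, hD]
    have h4 : U 0 = 1 := by simp [hU]
    simp only [pow_zero, Nat.choose_zero_right, Nat.cast_one, one_mul, h4]
    ring
  have claim2 : A - B = ∑ k ∈ range (N+1), (-1)^k * (N.choose k : ℂ) * U k * V (k+1) * (v k - u k) := by
    rw [hA, hB, ← Finset.sum_sub_distrib]
    refine Finset.sum_congr rfl (fun k hk => ?_)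
    have hk' : k < N + 1 := Finset.mem_range.mp hk
    have hVk : V k = v k * V (k+1) := Finset.prod_eq_prod_Ico_succ_bot hk' v
    have hUk : U (k+1) = U k * u k := Finset.prod_range_succ u k
    rw [hVk, hUk]; ring
  -- pointwise value of v k - u k
  have hvu : ∀ k : ℕ, v k - u k = a*(c-b) - m*(b+k) := by
    intro k; simp only [hu, hv]; ring
  have claim3 : G (N+1) m a b c
      = a*(c-b) * (∑ k ∈ range (N+1), (-1)^k * (N.choose k : ℂ) * U k * V (k+1))
        - m * (∑ k ∈ range (N+1), (-1)^k * (N.choose k : ℂ) * (b+k) * U k * V (k+1)) := by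
    rw [claim1, claim2, Finset.mul_sum, Finset.mul_sum, ← Finset.sum_sub_distrib]
    refine Finset.sum_congr rfl (fun k hk => ?_)
    rw [hvu k]; ring
  -- identify the two sums
  have hS1 : (∑ k ∈ range (N+1), (-1)^k * (N.choose k : ℂ) * U k * V (k+1))
      = G N (m-2) (a+1) b (c+1) := by
    refine Finset.sum_congr rfl (fun k hk => ?_)
    have hUeq : U k = ∏ i ∈ range k, ((m-2+(a+1)+(c+1)+i)*(b+i)) := by
      exact Finset.prod_congr rfl (fun i _ => by simp only [hu]; ring)
    have hVeq : V (k+1) = ∏ j ∈ Ico k N, (((c+1)+j)*((a+1)+b+j)) := by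
      rw [hV]
      rw [show (∏ j ∈ Ico k N, (((c+1)+j)*((a+1)+b+j)))
          = ∏ j ∈ Ico k N, (((c+1)+j)*(a+b+1+j)) from
        Finset.prod_congr rfl (fun j _ => by ring), ico_shift]
    rw [hUeq, hVeq]
  have hS2 : (∑ k ∈ range (N+1), (-1)^k * (N.choose k : ℂ) * (b+k) * U k * V (k+1))
      = b * G N (m-1) a (b+1) (c+1) := by
    have hGun : G N (m-1) a (b+1) (c+1)
        = ∑ k ∈ range (N+1), (-1)^k * (N.choose k : ℂ) *
            (∏ i ∈ range k, ((m-1+a+(c+1)+i)*((b+1)+i))) *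
            (∏ j ∈ Ico k N, (((c+1)+j)*(a+(b+1)+j))) := rfl
    rw [hGun, Finset.mul_sum]
    refine Finset.sum_congr rfl (fun k hk => ?_)
    have hsplit : (b+(k:ℂ)) * U k = b * ∏ i ∈ range k, ((m-1+a+(c+1)+i)*((b+1)+i)) := by
      rw [hU]
      simp only [hu]
      rw [Finset.prod_mul_distrib, Finset.prod_mul_distrib]
      have := shift_prod b k
      have h5 : (∏ i ∈ range k, ((m:ℂ)+a+c+i)) = ∏ i ∈ range k, ((m-1)+a+(c+1)+i) :=
        Finset.prod_congr rfl (fun i _ => by ring)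
      have h6 : (∏ i ∈ range k, ((b:ℂ)+1+i)) = ∏ i ∈ range k, ((b+1)+(i:ℂ)) :=
        Finset.prod_congr rfl (fun i _ => by ring)
      rw [← h5]
      calc (b+(k:ℂ)) * ((∏ i ∈ range k, (m+a+c+i)) * ∏ i ∈ range k, (b+i))
          = (∏ i ∈ range k, (m+a+c+i)) * ((∏ i ∈ range k, (b+i)) * (b+k)) := by ring
        _ = (∏ i ∈ range k, (m+a+c+i)) * (b * ∏ i ∈ range k, (b+1+i)) := by rw [this]
        _ = b * ((∏ i ∈ range k, (m+a+c+i)) * ∏ i ∈ range k, ((b+1)+(i:ℂ))) := by rw [← h6]; ring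
    have hVeq : V (k+1) = ∏ j ∈ Ico k N, (((c+1)+j)*(a+(b+1)+j)) := by
      rw [hV]
      rw [show (∏ j ∈ Ico k N, (((c+1)+j)*(a+(b+1)+j)))
          = ∏ j ∈ Ico k N, (((c+1)+j)*(a+b+1+j)) from
        Finset.prod_congr rfl (fun j _ => by ring), ico_shift]
    rw [hVeq]
    have : (-1:ℂ)^k * (N.choose k : ℂ) * (b+k) * U k
        = b * ((-1)^k * (N.choose k : ℂ) * ∏ i ∈ range k, ((m-1+a+(c+1)+i)*((b+1)+i))) := by
      calc (-1:ℂ)^k * (N.choose k : ℂ) * (b+k) * U k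
          = (-1)^k * (N.choose k : ℂ) * ((b+(k:ℂ)) * U k) := by ring
        _ = (-1)^k * (N.choose k : ℂ) * (b * ∏ i ∈ range k, ((m-1+a+(c+1)+i)*((b+1)+i))) := by rw [hsplit]
        _ = _ := by ring
    linear_combination (∏ j ∈ Ico k N, ((c+1+(j:ℂ))*(a+(b+1)+j))) * this
  rw [claim3, hS1, hS2]
  ring

lemma prod_shift_sub (x : ℂ) (k : ℕ) :
    (∏ i ∈ range (k+1), (x + 1 + i)) - (∏ i ∈ range (k+1), (x + i))
      = (k+1) * ∏ i ∈ range k, (x + 1 + i) := by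
  rw [Finset.prod_range_succ, prod_shift']
  ring

lemma R2 (N : ℕ) (m a b c : ℂ) :
    G (N+1) (m+1) a b c = G (N+1) m a b c - (N+1) * b * G N m a (b+1) (c+1) := by
  set v : ℕ → ℂ := fun j => (c+j)*(a+b+j) with hv
  set V : ℕ → ℂ := fun k => ∏ j ∈ Ico k (N+1), v j with hV
  have key : G (N+1) (m+1) a b c - G (N+1) m a b c
      = ∑ k ∈ range (N+2), (-1)^k * ((N+1).choose k : ℂ) *
          ((∏ i ∈ range k, (m+a+c+1+i)) - (∏ i ∈ range k, (m+a+c+i))) *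
          (∏ i ∈ range k, (b+i)) * V k := by
    show (∑ k ∈ range (N+2), (-1)^k * ((N+1).choose k : ℂ) *
            (∏ i ∈ range k, ((m+1+a+c+i)*(b+i))) * V k)
        - (∑ k ∈ range (N+2), (-1)^k * ((N+1).choose k : ℂ) *
            (∏ i ∈ range k, ((m+a+c+i)*(b+i))) * V k) = _
    rw [← Finset.sum_sub_distrib]
    refine Finset.sum_congr rfl (fun k _ => ?_)
    rw [Finset.prod_mul_distrib, Finset.prod_mul_distrib]
    have : (∏ i ∈ range k, ((m:ℂ)+1+a+c+i)) = ∏ i ∈ range k, (m+a+c+1+i) :=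
      Finset.prod_congr rfl (fun i _ => by ring)
    rw [this]; ring
  have key2 : G (N+1) (m+1) a b c - G (N+1) m a b c
      = ∑ t ∈ range (N+1), (-1)^(t+1) * ((N+1).choose (t+1) : ℂ) * ((t:ℂ)+1) *
          (∏ i ∈ range t, (m+a+c+1+i)) * ((b * ∏ i ∈ range t, (b+1+i))) * V (t+1) := by
    rw [key, Finset.sum_range_succ']
    simp only [Finset.prod_range_zero, sub_self, mul_zero, zero_mul, mul_one, add_zero]
    refine Finset.sum_congr rfl (fun t _ => ?_)
    rw [prod_shift_sub, ← prod_shift' b t]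
    rw [Finset.prod_range_succ]
    ring
  have key3 : ∑ t ∈ range (N+1), (-1)^(t+1) * ((N+1).choose (t+1) : ℂ) * ((t:ℂ)+1) *
          (∏ i ∈ range t, (m+a+c+1+i)) * ((b * ∏ i ∈ range t, (b+1+i))) * V (t+1)
      = -((N:ℂ)+1) * b * G N m a (b+1) (c+1) := by
    have hGun : G N m a (b+1) (c+1)
        = ∑ t ∈ range (N+1), (-1)^t * (N.choose t : ℂ) *
            (∏ i ∈ range t, ((m+a+(c+1)+i)*((b+1)+i))) *
            (∏ j ∈ Ico t N, (((c+1)+j)*(a+(b+1)+j))) := rfl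
    rw [hGun, Finset.mul_sum]
    refine Finset.sum_congr rfl (fun t _ => ?_)
    have hch : ((N+1).choose (t+1) : ℂ) * ((t:ℂ)+1) = ((N:ℂ)+1) * (N.choose t : ℂ) := by
      have := Nat.add_one_mul_choose_eq N t
      have : ((N+1) * N.choose t : ℕ) = ((N+1).choose (t+1) * (t+1) : ℕ) := this
      have h := congrArg (fun x : ℕ => (x : ℂ)) this
      push_cast at h
      linear_combination -h
    have hVeq : V (t+1) = ∏ j ∈ Ico t N, (((c+1)+j)*(a+(b+1)+j)) := by
      rw [hV]
      rw [show (∏ j ∈ Ico t N, (((c+1)+j)*(a+(b+1)+j)))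
          = ∏ j ∈ Ico t N, (((c+1)+j)*(a+b+1+j)) from
        Finset.prod_congr rfl (fun j _ => by ring), ico_shift]
    have hUeq : (∏ i ∈ range t, ((m+a+(c+1)+i)*((b+1)+i)))
        = (∏ i ∈ range t, (m+a+c+1+i)) * (∏ i ∈ range t, (b+1+i)) := by
      rw [← Finset.prod_mul_distrib]
      exact Finset.prod_congr rfl (fun i _ => by ring)
    rw [hVeq, hUeq]
    rw [pow_succ]
    linear_combination (-(-1:ℂ)^t) * (∏ i ∈ range t, ((m:ℂ)+a+c+1+i)) * (∏ i ∈ range t, ((b:ℂ)+1+i)) * b * (∏ j ∈ Ico t N, (((c:ℂ)+1+j)*(a+(b+1)+j))) * hch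
  linear_combination key2.trans key3

lemma pee (x w : ℂ) (n : ℕ) :
    ∏ i ∈ range (n+1), ((x+i)*(w+i)) = x * w * ∏ i ∈ range n, ((x+1+i)*(w+1+i)) := by
  rw [Finset.prod_mul_distrib, Finset.prod_mul_distrib, prod_shift' x n, prod_shift' w n]
  ring

lemma keyG : ∀ n : ℕ, ∀ a b c : ℂ, G n ((n:ℂ)-1) a b c = ∏ i ∈ range n, ((a+i)*(c-b+i)) := by
  intro n
  induction n using Nat.strong_induction_on with
  | _ n ih =>
    match n with
    | 0 => intro a b c; simp [G]
    | 1 =>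
      intro a b c
      simp [G, Finset.sum_range_succ, Finset.prod_range_succ,
        Finset.prod_Ico_eq_prod_range]
      ring
    | (N+2) =>
      intro a b c
      have hm : (((N:ℕ)+2 : ℕ) : ℂ) - 1 = ((N:ℂ)+1) := by push_cast; ring
      rw [hm]
      have e1 := R1 (N+1) ((N:ℂ)+1) a b c
      have c1 : ((N:ℂ)+1) - 2 = ((N:ℕ):ℂ) - 1 := by ring
      have c2 : ((N:ℂ)+1) - 1 = (((N:ℕ)+1 : ℕ):ℂ) - 1 := by push_cast; ring
      rw [c1, c2] at e1
      have e2 := R2 N ((N:ℂ) - 1) (a+1) b (c+1)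
      have c3 : ((N:ℂ)-1) + 1 = (((N:ℕ)+1 : ℕ):ℂ) - 1 := by push_cast; ring
      rw [c3] at e2
      have ih1 := ih (N+1) (by omega)
      have ih0 := ih N (by omega)
      rw [ih1 a (b+1) (c+1)] at e1
      rw [ih1 (a+1) b (c+1), ih0 (a+1) (b+1) (c+1+1)] at e2
      have q1 : (∏ i ∈ range (N+2), ((a+i)*(c-b+i)))
          = a*(c-b) * ∏ i ∈ range (N+1), ((a+1+i)*(c+1-b+i)) := by
        rw [pee a (c-b) (N+1)]
        rw [show (∏ i ∈ range (N+1), ((a+1+(i:ℂ))*(c-b+1+i)))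
            = ∏ i ∈ range (N+1), ((a+1+(i:ℂ))*(c+1-b+i)) from
          Finset.prod_congr rfl (fun i _ => by ring)]
      have q2 : (∏ i ∈ range (N+1), ((a+i)*(c+1-(b+1)+i)))
          = a*(c-b) * ∏ i ∈ range N, ((a+1+i)*(c+1+1-(b+1)+i)) := by
        rw [show (∏ i ∈ range (N+1), ((a+(i:ℂ))*(c+1-(b+1)+i)))
            = ∏ i ∈ range (N+1), ((a+(i:ℂ))*(c-b+i)) from
          Finset.prod_congr rfl (fun i _ => by ring), pee a (c-b) N]
        rw [show (∏ i ∈ range N, ((a+1+(i:ℂ))*(c-b+1+i)))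
            = ∏ i ∈ range N, ((a+1+(i:ℂ))*(c+1+1-(b+1)+i)) from
          Finset.prod_congr rfl (fun i _ => by ring)]
      show G (N+1+1) ((N:ℂ)+1) a b c = _
      rw [e1]
      linear_combination (-(a*(c-b)))*e2 - q1 - (((N:ℂ)+1)*b)*q2

theorem stmt_8 (n : ℕ) (a b c : ℂ) (h : ∀ m : ℕ, m < n → a + b + m ≠ 0) :
    risingFactorial a n * risingFactorial (c - b) n / risingFactorial (a + b) n =
      ∑ k ∈ Finset.range (n + 1),
        (-1) ^ k * (n.choose k : ℂ) * risingFactorial (a + c + n - 1) k *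
          risingFactorial (c + k) (n - k) * risingFactorial b k /
            risingFactorial (a + b) k := by
  have hL : risingFactorial a n * risingFactorial (c-b) n = G n ((n:ℂ)-1) a b c := by
    rw [keyG n a b c, risingFactorial, risingFactorial, ← Finset.prod_mul_distrib]
  rw [hL]
  rw [show G n ((n:ℂ)-1) a b c = ∑ k ∈ Finset.range (n+1), (-1)^k * (n.choose k : ℂ) *
      (∏ i ∈ Finset.range k, (((n:ℂ)-1+a+c+i)*(b+i))) *
      (∏ j ∈ Finset.Ico k n, ((c+j)*(a+b+j))) from rfl]
  rw [Finset.sum_div]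
  refine Finset.sum_congr rfl (fun k hk => ?_)
  have hk' : k ≤ n := Nat.lt_succ_iff.mp (Finset.mem_range.mp hk)
  have hWne : (∏ j ∈ Ico k n, (a+b+(j:ℂ))) ≠ 0 := by
    refine Finset.prod_ne_zero_iff.mpr (fun j hj => ?_)
    exact h j (Finset.mem_Ico.mp hj).2
  have split : (∏ j ∈ Ico k n, ((c+(j:ℂ))*(a+b+j)))
      = (∏ j ∈ Ico k n, (c+(j:ℂ))) * ∏ j ∈ Ico k n, (a+b+(j:ℂ)) := Finset.prod_mul_distrib
  have hDsplit : risingFactorial (a+b) n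
      = risingFactorial (a+b) k * ∏ j ∈ Ico k n, (a+b+(j:ℂ)) := by
    rw [risingFactorial, risingFactorial, ← Finset.prod_range_mul_prod_Ico _ hk']
  have hc : (∏ j ∈ Ico k n, (c+(j:ℂ))) = risingFactorial (c+k) (n-k) := by
    rw [risingFactorial, Finset.prod_Ico_eq_prod_range]
    exact Finset.prod_congr rfl (fun i _ => by push_cast; ring)
  have hA : (∏ i ∈ range k, (((n:ℂ)-1+a+c+i)*(b+i)))
      = risingFactorial (a+c+(n:ℂ)-1) k * risingFactorial b k := by
    rw [risingFactorial, risingFactorial, ← Finset.prod_mul_distrib]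
    exact Finset.prod_congr rfl (fun i _ => by ring)
  rw [split, hA, hc, hDsplit]
  rw [show (-1:ℂ)^k * (n.choose k : ℂ) * (risingFactorial (a+c+(n:ℂ)-1) k * risingFactorial b k) *
      (risingFactorial (c+k) (n-k) * ∏ j ∈ Ico k n, (a+b+(j:ℂ)))
      = ((-1)^k * (n.choose k : ℂ) * risingFactorial (a+c+(n:ℂ)-1) k * risingFactorial (c+k) (n-k) *
        risingFactorial b k) * ∏ j ∈ Ico k n, (a+b+(j:ℂ)) from by ring]
  rw [mul_div_mul_right _ _ hWne]
end

section
/- For every integer n ≥ 1 and every complex number z, one has ∑_{j=0}^{n} (−1)^j · C(n, j) · (z + j)^(n−j) · (z + n − 1)^(j) = 0. (For n = 0 the sum equals 1.) -/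
open Polynomial Finset

lemma risingFactorial_eq_Ico (z : ℂ) (a b : ℕ) :
    risingFactorial (z + a) b = ∏ i ∈ Finset.Ico a (a + b), (z + i) := by
  rw [Finset.prod_Ico_eq_prod_range]
  simp only [Nat.add_sub_cancel_left, risingFactorial]
  refine Finset.prod_congr rfl fun i _ => ?_
  push_cast
  ring

lemma fwdDiff_iter_eval_eq_zero (m : ℕ) (p : Polynomial ℂ) (hp : p.degree < m) :
    (fwdDiff (1 : ℕ))^[m] (fun k : ℕ ↦ p.eval (k : ℂ)) = 0 := by
  induction m generalizing p with
  | zero =>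
    have hp0 : p = 0 := by
      rw [← Polynomial.degree_eq_bot]
      simpa using hp
    subst hp0
    funext k
    simp
  | succ m ih =>
    rw [Function.iterate_succ_apply]
    have hd : fwdDiff (1 : ℕ) (fun k : ℕ ↦ p.eval (k : ℂ))
        = fun k : ℕ ↦ (p.comp (X + C 1) - p).eval (k : ℂ) := by
      funext k
      simp only [fwdDiff, Polynomial.eval_sub, Polynomial.eval_comp, Polynomial.eval_add,
        Polynomial.eval_X, Polynomial.eval_C]
      push_cast
      ring_nf
    rw [hd]
    apply ih
    by_cases hp0 : p = 0
    · simp only [hp0, Polynomial.zero_comp, sub_zero, Polynomial.degree_zero]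
      exact WithBot.bot_lt_coe m
    · have hco : p.comp (X + C 1) = Polynomial.taylor 1 p := (Polynomial.taylor_apply 1 p).symm
      have hco0 : p.comp (X + C 1) ≠ 0 := by
        rw [hco]
        intro h
        apply hp0
        have := congrArg (Polynomial.taylor (-1)) h
        rwa [Polynomial.taylor_taylor, neg_add_cancel, Polynomial.taylor_zero',
          LinearMap.id_apply, map_zero] at this
      have hnd : (p.comp (X + C 1)).natDegree = p.natDegree := by
        rw [hco, Polynomial.natDegree_taylor]
      have h1 : (p.comp (X + C 1)).degree = p.degree := by
        rw [Polynomial.degree_eq_natDegree hco0, Polynomial.degree_eq_natDegree hp0, hnd]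
      have h2 : (p.comp (X + C 1)).leadingCoeff = p.leadingCoeff := by
        rw [Polynomial.leadingCoeff_comp (by rw [Polynomial.natDegree_X_add_C]; norm_num),
          Polynomial.leadingCoeff_X_add_C, one_pow, mul_one]
      have hlt := Polynomial.degree_sub_lt h1 hco0 h2
      rw [h1] at hlt
      have hple : p.degree ≤ (m : WithBot ℕ) := by
        rw [← Polynomial.natDegree_le_iff_degree_le]
        have := (Polynomial.natDegree_lt_iff_degree_lt hp0).mpr hp
        omega
      exact lt_of_lt_of_le hlt hple

lemma term_eq (z : ℂ) (m j : ℕ) (hj : j ≤ m + 1) :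
    risingFactorial (z + j) (m + 1 - j) * risingFactorial (z + m) j
      = (z + m) * risingFactorial (z + j) m := by
  rcases Nat.eq_zero_or_pos j with hj0 | hj1
  · subst hj0
    simp only [Nat.sub_zero, risingFactorial, Finset.prod_range_zero, mul_one]
    rw [Finset.prod_range_succ]
    ring
  · rw [risingFactorial_eq_Ico z j (m + 1 - j), risingFactorial_eq_Ico z m j,
      risingFactorial_eq_Ico z j m]
    have hjm : j + (m + 1 - j) = m + 1 := by omega
    rw [hjm]
    rw [Finset.prod_eq_prod_Ico_succ_bot (a := m) (b := m + j) (by omega)]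
    rw [show j + m = m + j by omega,
      ← Finset.prod_Ico_consecutive (fun i : ℕ => (z + (i : ℂ))) (show j ≤ m + 1 by omega)
        (show m + 1 ≤ m + j by omega)]
    ring

theorem stmt_13 (n : ℕ) (hn : 1 ≤ n) (z : ℂ) :
    ∑ j ∈ Finset.range (n + 1),
      (-1) ^ j * (n.choose j : ℂ) * risingFactorial (z + j) (n - j) *
        risingFactorial (z + n - 1) j = 0 := by
  obtain ⟨m, rfl⟩ : ∃ m, n = m + 1 := ⟨n - 1, by omega⟩
  have hzn : z + ((m : ℂ) + 1) - 1 = z + m := by ring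
  -- the polynomial whose evaluations give `risingFactorial (z + j) m`
  set p : Polynomial ℂ := ∏ i ∈ Finset.range m, (X + C (z + i)) with hp
  have hpe : ∀ k : ℕ, p.eval (k : ℂ) = risingFactorial (z + k) m := by
    intro k
    rw [hp, Polynomial.eval_prod, risingFactorial]
    refine Finset.prod_congr rfl fun i _ => ?_
    simp [add_comm, add_assoc, add_left_comm]
  have hdeg : p.degree < ((m + 1 : ℕ) : WithBot ℕ) := by
    rw [hp, Polynomial.degree_prod]
    simp only [Polynomial.degree_X_add_C, Finset.sum_const, Finset.card_range, nsmul_eq_mul,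
      mul_one]
    exact_mod_cast Nat.lt_succ_self m
  have hzero := fwdDiff_iter_eval_eq_zero (m + 1) p hdeg
  have hsum := fwdDiff_iter_eq_sum_shift (1 : ℕ) (fun k : ℕ ↦ p.eval (k : ℂ)) (m + 1) 0
  rw [hzero] at hsum
  have hsum' : (0 : ℂ) = ∑ k ∈ Finset.range (m + 1 + 1),
      ((-1 : ℂ) ^ (m + 1 - k) * ((m + 1).choose k : ℂ)) * p.eval (k : ℂ) := by
    have := hsum.symm
    rw [Pi.zero_apply] at this
    rw [← this]
    refine Finset.sum_congr rfl fun k _ => ?_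
    simp only [zero_add, smul_eq_mul, zsmul_eq_mul]
    push_cast
    ring_nf
  -- multiply by (-1)^(m+1)
  have hsum2 : ∑ j ∈ Finset.range (m + 1 + 1),
      (-1 : ℂ) ^ j * ((m + 1).choose j : ℂ) * p.eval (j : ℂ) = 0 := by
    have : ∑ j ∈ Finset.range (m + 1 + 1),
        (-1 : ℂ) ^ j * ((m + 1).choose j : ℂ) * p.eval (j : ℂ)
        = (-1 : ℂ) ^ (m + 1) * ∑ k ∈ Finset.range (m + 1 + 1),
          ((-1 : ℂ) ^ (m + 1 - k) * ((m + 1).choose k : ℂ)) * p.eval (k : ℂ) := by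
      rw [Finset.mul_sum]
      refine Finset.sum_congr rfl fun j hj => ?_
      have hjle : j ≤ m + 1 := by
        have := Finset.mem_range.mp hj; omega
      have hpow : (-1 : ℂ) ^ (m + 1) * (-1 : ℂ) ^ (m + 1 - j) = (-1 : ℂ) ^ j := by
        rw [← pow_add]
        have h2 : m + 1 + (m + 1 - j) = j + 2 * (m + 1 - j) := by omega
        rw [h2, pow_add, pow_mul]
        norm_num
      calc (-1 : ℂ) ^ j * ((m + 1).choose j : ℂ) * p.eval (j : ℂ)
          = ((-1 : ℂ) ^ (m + 1) * (-1 : ℂ) ^ (m + 1 - j)) * ((m + 1).choose j : ℂ)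
            * p.eval (j : ℂ) := by rw [hpow]
        _ = (-1 : ℂ) ^ (m + 1) * ((-1 : ℂ) ^ (m + 1 - j) * ((m + 1).choose j : ℂ)
            * p.eval (j : ℂ)) := by ring
    rw [this, ← hsum', mul_zero]
  calc ∑ j ∈ Finset.range (m + 1 + 1),
        (-1) ^ j * ((m + 1).choose j : ℂ) * risingFactorial (z + j) (m + 1 - j) *
          risingFactorial (z + (m + 1 : ℕ) - 1) j
      = ∑ j ∈ Finset.range (m + 1 + 1),
        (z + m) * ((-1) ^ j * ((m + 1).choose j : ℂ) * p.eval (j : ℂ)) := by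
        refine Finset.sum_congr rfl fun j hj => ?_
        have hjle : j ≤ m + 1 := by
          have := Finset.mem_range.mp hj; omega
        have hc : z + ((m + 1 : ℕ) : ℂ) - 1 = z + m := by push_cast; ring
        rw [hc, mul_assoc ((-1 : ℂ) ^ j * _), term_eq z m j hjle, hpe j]
        ring
    _ = (z + m) * ∑ j ∈ Finset.range (m + 1 + 1),
        ((-1) ^ j * ((m + 1).choose j : ℂ) * p.eval (j : ℂ)) := by rw [Finset.mul_sum]
    _ = 0 := by rw [hsum2, mul_zero]
end
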